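/- Let γ ∈ (1,3], m ∈ {1,2}, z > 0, and define the jump map 𝒥 on the region S_U = {(V,C) : C ≤ 0, 1+V > −C} by 𝒥₁(V,C) = (γ−1)/(γ+1)·(1+V) + 2C²/((γ+1)(1+V)) − 1 and 𝒥₂(V,C) = −√(C² + (γ−1)/2·((1+V)² − (1+𝒥₁(V,C))²)). Then for every (V,C) ∈ S_U with C < 0: (a) |𝒥₂(V,C)| > 1+𝒥₁(V,C), and the image 𝒥(V,C) lies in the supersonic region S_L = {(V,C): C<0, −√((γ−1)/(2γ))·C ≤ 1+V < −C}; (b) 𝒥₁(V,C) < V and 𝒥₂(V,C) < C; and (c) 𝒥 is injective on S_U. -/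

import Mathlib

/-- First component of the Rankine–Hugoniot jump map:
`1 + 𝒥₁ = (γ−1)/(γ+1)·(1+V) + 2C²/((γ+1)(1+V))`. -/
noncomputable def J1 (γ V C : ℝ) : ℝ :=
  (γ - 1) / (γ + 1) * (1 + V) + 2 * C ^ 2 / ((γ + 1) * (1 + V)) - 1

/-- Second component of the jump map:
`𝒥₂ = −√(C² + (γ−1)/2·((1+V)² − (1+𝒥₁)²))`. -/
noncomputable def J2 (γ V C : ℝ) : ℝ :=
  -Real.sqrt (C ^ 2 + (γ - 1) / 2 * ((1 + V) ^ 2 - (1 + J1 γ V C) ^ 2))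

set_option maxHeartbeats 1000000

/-- Properties of the jump map `𝒥 = (𝒥₁, 𝒥₂)` on
`S_U = {(V,C) : C ≤ 0, 1+V > −C}`, for `γ ∈ (1,3]`, `m ∈ {1,2}`, `z > 0`:
(a) for `C < 0`, the image lies in
`S_L = {(V,C) : C < 0, −√((γ−1)/(2γ))·C ≤ 1+V < −C}`, and moreover
`𝒥₂² > (1+𝒥₁)²·(γ−1)/(2γ)` and `|𝒥₂| > 1+𝒥₁`;
(b) `𝒥₁ < V` and `𝒥₂ < C`; (c) `𝒥` is injective on `S_U`. -/
theorem jump_map_properties (γ : ℝ) (m : ℕ) (z : ℝ)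
    (hγ1 : 1 < γ) (hγ3 : γ ≤ 3) (hm : m = 1 ∨ m = 2) (hz : 0 < z) :
    (∀ V C : ℝ, C < 0 → -C < 1 + V →
      (J2 γ V C) ^ 2 > (1 + J1 γ V C) ^ 2 * ((γ - 1) / (2 * γ)) ∧
      1 + J1 γ V C < |J2 γ V C| ∧
      J2 γ V C < 0 ∧
      -Real.sqrt ((γ - 1) / (2 * γ)) * J2 γ V C ≤ 1 + J1 γ V C ∧
      1 + J1 γ V C < -(J2 γ V C) ∧
      J1 γ V C < V ∧ J2 γ V C < C) ∧
    (∀ V C V' C' : ℝ, C ≤ 0 → -C < 1 + V → C' ≤ 0 → -C' < 1 + V' →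
      J1 γ V C = J1 γ V' C' → J2 γ V C = J2 γ V' C' → V = V' ∧ C = C') := by
  have hγp : (0:ℝ) < γ + 1 := by linarith
  have hγm : (0:ℝ) < γ - 1 := by linarith
  have hγ0 : (0:ℝ) < γ := by linarith
  constructor
  · intro V C hC hVC
    have hu : 0 < 1 + V := by linarith
    have hA : 0 < (γ + 1) * (1 + V) := mul_pos hγp hu
    have hwdef : (1 + J1 γ V C) * ((γ + 1) * (1 + V)) =
        (γ - 1) * (1 + V) ^ 2 + 2 * C ^ 2 := by
      simp only [J1]; field_simp; ring
    have hC2 : 0 < C ^ 2 := by nlinarith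
    have hCu : C ^ 2 < (1 + V) ^ 2 := by nlinarith
    have hw0 : 0 < 1 + J1 γ V C := by
      nlinarith [hwdef, hA, mul_pos hγm (mul_pos hu hu), sq_nonneg C]
    have hwu : 1 + J1 γ V C < 1 + V := by nlinarith [hwdef, hA, hCu]
    have hD0 : 0 < C ^ 2 + (γ - 1) / 2 * ((1 + V) ^ 2 - (1 + J1 γ V C) ^ 2) := by
      nlinarith [mul_pos hγm (mul_pos (sub_pos.2 hwu)
        (show (0:ℝ) < (1 + V) + (1 + J1 γ V C) by linarith)), hC2]
    have hJ2 : J2 γ V C =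
        -Real.sqrt (C ^ 2 + (γ - 1) / 2 * ((1 + V) ^ 2 - (1 + J1 γ V C) ^ 2)) := rfl
    have hsq : (J2 γ V C) ^ 2 =
        C ^ 2 + (γ - 1) / 2 * ((1 + V) ^ 2 - (1 + J1 γ V C) ^ 2) := by
      rw [hJ2, neg_sq, Real.sq_sqrt hD0.le]
    have hws : (1 + J1 γ V C) ^ 2 * ((γ + 1) * (1 + V)) ^ 2 =
        ((γ - 1) * (1 + V) ^ 2 + 2 * C ^ 2) ^ 2 := by rw [← mul_pow, hwdef]
    have hN : 0 < (γ - 1) * (1 + V) ^ 2 + 2 * C ^ 2 := by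
      nlinarith [mul_pos hγm (mul_pos hu hu), sq_nonneg C]
    have hlt : 1 + J1 γ V C <
        Real.sqrt (C ^ 2 + (γ - 1) / 2 * ((1 + V) ^ 2 - (1 + J1 γ V C) ^ 2)) := by
      rw [Real.lt_sqrt hw0.le]
      rw [← mul_lt_mul_iff_of_pos_right (show (0:ℝ) < 2 * ((γ + 1) * (1 + V)) ^ 2 by positivity)]
      have e2 : (C ^ 2 + (γ - 1) / 2 * ((1 + V) ^ 2 - (1 + J1 γ V C) ^ 2)) *
            (2 * ((γ + 1) * (1 + V)) ^ 2) -
          (1 + J1 γ V C) ^ 2 * (2 * ((γ + 1) * (1 + V)) ^ 2) =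
          2 * (γ + 1) * ((γ - 1) * (1 + V) ^ 2 + 2 * C ^ 2) * ((1 + V) ^ 2 - C ^ 2) := by
        linear_combination (-(γ + 1)) * hws
      linarith [e2, mul_pos (mul_pos (mul_pos (show (0:ℝ) < 2 by norm_num) hγp) hN)
        (sub_pos.2 hCu)]
    refine ⟨?_, ?_, ?_, ?_, ?_, ?_, ?_⟩
    · rw [gt_iff_lt, hsq, ← mul_div_assoc,
        div_lt_iff₀ (show (0:ℝ) < 2 * γ by positivity),
        ← mul_lt_mul_iff_of_pos_right (show (0:ℝ) < ((γ + 1) * (1 + V)) ^ 2 by positivity)]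
      have key1 : 0 < 2 * γ * (γ + 1) * (1 + V) ^ 2 * C ^ 2 +
          γ * (γ - 1) * (γ + 1) * (1 + V) ^ 4 -
          (γ - 1) * ((γ - 1) * (1 + V) ^ 2 + 2 * C ^ 2) ^ 2 := by
        linarith [mul_pos (mul_pos (mul_pos hγm (show (0:ℝ) < 3 * γ - 1 by linarith))
            (mul_pos hu hu)) (sub_pos.2 hCu),
          mul_pos (mul_pos (mul_pos hγp hγp) hC2) (mul_pos hu hu),
          mul_pos (mul_pos (mul_pos (show (0:ℝ) < 4 by norm_num) hγm) hC2)
            (sub_pos.2 hCu)]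
      have e1 : (C ^ 2 + (γ - 1) / 2 * ((1 + V) ^ 2 - (1 + J1 γ V C) ^ 2)) * (2 * γ) *
            ((γ + 1) * (1 + V)) ^ 2 -
          (1 + J1 γ V C) ^ 2 * (γ - 1) * ((γ + 1) * (1 + V)) ^ 2 =
          (γ + 1) * (2 * γ * (γ + 1) * (1 + V) ^ 2 * C ^ 2 +
            γ * (γ - 1) * (γ + 1) * (1 + V) ^ 4 -
            (γ - 1) * ((γ - 1) * (1 + V) ^ 2 + 2 * C ^ 2) ^ 2) := by
        linear_combination (1 - γ ^ 2) * hws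
      linarith [e1, mul_pos hγp key1]
    · rw [hJ2, abs_neg, abs_of_nonneg (Real.sqrt_nonneg _)]
      exact hlt
    · rw [hJ2, neg_lt_zero]
      exact Real.sqrt_pos.2 hD0
    · rw [hJ2, neg_mul_neg,
        ← Real.sqrt_mul (div_nonneg hγm.le (by linarith : (0:ℝ) ≤ 2 * γ))]
      have hkD : (γ - 1) / (2 * γ) *
          (C ^ 2 + (γ - 1) / 2 * ((1 + V) ^ 2 - (1 + J1 γ V C) ^ 2)) ≤
          (1 + J1 γ V C) ^ 2 := by
        rw [div_mul_eq_mul_div, div_le_iff₀ (show (0:ℝ) < 2 * γ by positivity),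
          ← mul_le_mul_iff_of_pos_right (show (0:ℝ) < ((γ + 1) * (1 + V)) ^ 2 by positivity)]
        have e4 : (1 + J1 γ V C) ^ 2 * (2 * γ) * ((γ + 1) * (1 + V)) ^ 2 -
            (γ - 1) * (C ^ 2 + (γ - 1) / 2 * ((1 + V) ^ 2 - (1 + J1 γ V C) ^ 2)) *
              ((γ + 1) * (1 + V)) ^ 2 =
            (γ + 1) ^ 2 * ((γ - 1) * (1 + V) ^ 2 * C ^ 2 + 2 * C ^ 4) := by
          linear_combination ((γ + 1) ^ 2 / 2) * hws
        have hpos4a : 0 < (γ - 1) * (1 + V) ^ 2 * C ^ 2 + 2 * C ^ 4 := by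
          nlinarith [mul_pos hγm (mul_pos (mul_pos hu hu) hC2), mul_pos hC2 hC2]
        have hpos4 : 0 < (γ + 1) ^ 2 * ((γ - 1) * (1 + V) ^ 2 * C ^ 2 + 2 * C ^ 4) :=
          mul_pos (pow_pos hγp 2) hpos4a
        linarith [e4, hpos4]
      calc Real.sqrt ((γ - 1) / (2 * γ) *
            (C ^ 2 + (γ - 1) / 2 * ((1 + V) ^ 2 - (1 + J1 γ V C) ^ 2)))
          ≤ Real.sqrt ((1 + J1 γ V C) ^ 2) := Real.sqrt_le_sqrt hkD
        _ = 1 + J1 γ V C := Real.sqrt_sq hw0.le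
    · rw [hJ2, neg_neg]
      exact hlt
    · linarith [hwu]
    · rw [hJ2, neg_lt]
      rw [show -C = Real.sqrt ((-C) ^ 2) from (Real.sqrt_sq (by linarith)).symm]
      apply Real.sqrt_lt_sqrt (by positivity)
      linarith [mul_pos hγm (mul_pos (sub_pos.2 hwu)
        (show (0:ℝ) < (1 + V) + (1 + J1 γ V C) by linarith))]
  · intro V C V' C' hC hVC hC' hVC' h1 h2
    have hu : 0 < 1 + V := by nlinarith
    have hu' : 0 < 1 + V' := by nlinarith
    have hA : 0 < (γ + 1) * (1 + V) := mul_pos hγp hu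
    have hwdef : (1 + J1 γ V C) * ((γ + 1) * (1 + V)) =
        (γ - 1) * (1 + V) ^ 2 + 2 * C ^ 2 := by
      simp only [J1]; field_simp; ring
    have hwdef' : (1 + J1 γ V C) * ((γ + 1) * (1 + V')) =
        (γ - 1) * (1 + V') ^ 2 + 2 * C' ^ 2 := by
      rw [h1]; simp only [J1]; field_simp; ring
    have hCu : C ^ 2 < (1 + V) ^ 2 := by nlinarith
    have hCu' : C' ^ 2 < (1 + V') ^ 2 := by nlinarith
    have hw0 : 0 < 1 + J1 γ V C := by
      nlinarith [hwdef, hA, mul_pos hγm (mul_pos hu hu), sq_nonneg C]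
    have hwu : 1 + J1 γ V C < 1 + V := by nlinarith [hwdef, hA, hCu]
    have hwu' : 1 + J1 γ V C < 1 + V' := by
      nlinarith [hwdef', mul_pos hγp hu', hCu']
    have hD0 : 0 ≤ C ^ 2 + (γ - 1) / 2 * ((1 + V) ^ 2 - (1 + J1 γ V C) ^ 2) := by
      nlinarith [mul_pos hγm (mul_pos (sub_pos.2 hwu)
        (show (0:ℝ) < (1 + V) + (1 + J1 γ V C) by linarith)), sq_nonneg C]
    have hD0' : 0 ≤ C' ^ 2 + (γ - 1) / 2 * ((1 + V') ^ 2 - (1 + J1 γ V' C') ^ 2) := by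
      rw [← h1]
      nlinarith [mul_pos hγm (mul_pos (sub_pos.2 hwu')
        (show (0:ℝ) < (1 + V') + (1 + J1 γ V C) by linarith)), sq_nonneg C']
    have hsqrt : Real.sqrt (C ^ 2 + (γ - 1) / 2 * ((1 + V) ^ 2 - (1 + J1 γ V C) ^ 2)) =
        Real.sqrt (C' ^ 2 + (γ - 1) / 2 * ((1 + V') ^ 2 - (1 + J1 γ V' C') ^ 2)) := by
      have := h2
      simp only [J2] at this
      linarith
    have hDeq : C ^ 2 + (γ - 1) / 2 * ((1 + V) ^ 2 - (1 + J1 γ V C) ^ 2) =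
        C' ^ 2 + (γ - 1) / 2 * ((1 + V') ^ 2 - (1 + J1 γ V' C') ^ 2) := by
      rw [← Real.sq_sqrt hD0, ← Real.sq_sqrt hD0', hsqrt]
    rw [← h1] at hDeq
    have hE : C ^ 2 + (γ - 1) / 2 * (1 + V) ^ 2 =
        C' ^ 2 + (γ - 1) / 2 * (1 + V') ^ 2 := by linarith
    have hz0 : (1 + J1 γ V C) * ((γ + 1) * ((1 + V) - (1 + V'))) = 0 := by
      linear_combination hwdef - hwdef' + 2 * hE
    have hVV : V = V' := by
      rcases mul_eq_zero.1 hz0 with h | h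
      · exact absurd h hw0.ne'
      · rcases mul_eq_zero.1 h with h | h
        · exact absurd h hγp.ne'
        · linarith
    have h9 : C ^ 2 = C' ^ 2 := by
      rw [hVV] at hE; linarith
    have hle : C ≤ C' := by nlinarith [h9]
    have hge : C' ≤ C := by nlinarith [h9]
    exact ⟨hVV, le_antisymm hle hge⟩
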